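/- Let p be a prime, q a power of p, and σ the affine map of F_q^m given by σ(x) = x·J_m + ε_m with J_m = I + N_m and ε_m = (1, 0, ..., 0). For k ≥ 0, the number of fixed points of σ^k in F_q^m is q^m if the p-adic valuation ν(k) satisfies ν(k) ≥ 1 + ⌊log_p m⌋ (equivalently σ^k = id), and 0 otherwise. -/

import Mathlib

/-! The embedding `x ↦ (1, x)` of `F^m` into `F^{m+1}` conjugates `σ` to the linear map
`y ↦ y·J_{m+1}`, so `σ^k` corresponds to `J_{m+1}^k`. Since `1` and `N` commute,
`J^{p^e} = (1 + N)^{p^e} = 1 + N^{p^e}` in characteristic `p`. If `p^e > m` then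
`N_{m+1}^{p^e} = 0` and `σ^{p^e} = id`; if `p^e ≤ m`, coordinate `p^e` of `(1, x)·J^{p^e}` is
`x_{p^e} + 1`, so `σ^{p^e}` has no fixed point. A fixed point of `σ^k` is fixed by `σ^g` for
`g = gcd(k, p^{1+⌊log_p m⌋})`, a power of `p`, and `g = p^{1+⌊log_p m⌋}` exactly when that power
divides `k`. -/

/-- The `m × m` nilpotent Jordan block: ones on the superdiagonal. -/
def nilJordan (F : Type*) [Field F] (m : ℕ) : Matrix (Fin m) (Fin m) F :=
  fun i j => if (j : ℕ) = (i : ℕ) + 1 then 1 else 0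

/-- The affine transformation `σ(x) = x·J_m + ε_m` of `F_q^m`. -/
def sigmaAff (F : Type*) [Field F] (m : ℕ) : (Fin m → F) → (Fin m → F) :=
  fun x => Matrix.vecMul x (1 + nilJordan F m) + (fun i : Fin m => if (i : ℕ) = 0 then (1 : F) else 0)

open Matrix Function

section

variable {F : Type*} [Field F]

theorem nilJordan_pow_apply {n : ℕ} (a : ℕ) (i j : Fin n) :
    (nilJordan F n ^ a) i j = if (j : ℕ) = i + a then 1 else 0 := by
  induction a generalizing i with
  | zero => simp [Matrix.one_apply, Fin.ext_iff, eq_comm]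
  | succ a ih =>
    rw [pow_succ', mul_apply]
    simp only [nilJordan, ih, ite_mul, one_mul, zero_mul]
    by_cases h : (i : ℕ) + 1 < n
    · rw [Finset.sum_eq_single ⟨i + 1, h⟩ (fun l _ hl => if_neg fun h' => hl (Fin.ext h'))
        (by simp), if_pos rfl]
      simp only [add_right_comm, add_assoc]
    · rw [Finset.sum_eq_zero fun l _ => if_neg (by omega), if_neg (by omega)]

theorem vecMul_nilJordan_apply {n : ℕ} (y : Fin n → F) (j : Fin n) :
    (y ᵥ* nilJordan F n) j = ∑ i : Fin n, if (j : ℕ) = (i : ℕ) + 1 then y i else 0 := by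
  simp [vecMul, dotProduct, nilJordan]

theorem vecMul_nilJordan_pow_apply {n : ℕ} (y : Fin n → F) (a : ℕ) (j : Fin n) :
    (y ᵥ* nilJordan F n ^ a) j = ∑ i : Fin n, if (j : ℕ) = (i : ℕ) + a then y i else 0 := by
  simp [vecMul, dotProduct, nilJordan_pow_apply]

theorem vecMul_nilJordan_pow_of_le {n a : ℕ} (h : n ≤ a) (y : Fin n → F) :
    y ᵥ* nilJordan F n ^ a = 0 := by
  ext j
  rw [vecMul_nilJordan_pow_apply, Pi.zero_apply]
  exact Finset.sum_eq_zero fun i _ => if_neg (by omega)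

theorem one_add_nilJordan_pow_char_pow {p : ℕ} (hp : p.Prime) [CharP F p] (n e : ℕ) :
    (1 + nilJordan F (n + 1)) ^ p ^ e = 1 + nilJordan F (n + 1) ^ p ^ e := by
  have := Fact.mk hp
  rw [add_pow_char_pow_of_commute _ _ (Commute.one_left _), one_pow]

theorem cons_one_sigmaAff (m : ℕ) (x : Fin m → F) :
    (Fin.cons 1 (sigmaAff F m x) : Fin (m + 1) → F) =
      Fin.cons 1 x ᵥ* (1 + nilJordan F (m + 1)) := by
  ext j
  refine Fin.cases ?_ (fun t => ?_) j
  · simp [vecMul_add, vecMul_nilJordan_apply]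
  · simp only [sigmaAff, Pi.add_apply, vecMul_add, vecMul_one, Fin.sum_univ_succ, Fin.cons_zero,
      Fin.cons_succ, Fin.val_succ, Fin.val_zero, vecMul_nilJordan_apply]
    simp only [Nat.add_right_cancel_iff]
    ring

theorem cons_one_sigmaAff_iterate (m k : ℕ) (x : Fin m → F) :
    (Fin.cons 1 ((sigmaAff F m)^[k] x) : Fin (m + 1) → F) =
      Fin.cons 1 x ᵥ* (1 + nilJordan F (m + 1)) ^ k := by
  induction k with
  | zero => simp
  | succ k ih => rw [iterate_succ_apply', cons_one_sigmaAff, ih, pow_succ, vecMul_vecMul]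

theorem isPeriodicPt_sigmaAff_char_pow {p : ℕ} (hp : p.Prime) [CharP F p] {m e : ℕ}
    (h : m < p ^ e) (x : Fin m → F) : IsPeriodicPt (sigmaAff F m) (p ^ e) x := by
  refine Fin.cons_right_injective (α := fun _ => F) 1 ?_
  rw [cons_one_sigmaAff_iterate, one_add_nilJordan_pow_char_pow hp, vecMul_add, vecMul_one,
    vecMul_nilJordan_pow_of_le h, add_zero]

theorem not_isPeriodicPt_sigmaAff_char_pow {p : ℕ} (hp : p.Prime) [CharP F p] {m e : ℕ}
    (h : p ^ e ≤ m) (x : Fin m → F) : ¬IsPeriodicPt (sigmaAff F m) (p ^ e) x := by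
  intro hx
  have key := congrFun (cons_one_sigmaAff_iterate m (p ^ e) x) ⟨p ^ e, by omega⟩
  rw [hx.eq, one_add_nilJordan_pow_char_pow hp, vecMul_add, vecMul_one, Pi.add_apply,
    left_eq_add, vecMul_nilJordan_pow_apply, Finset.sum_eq_single 0] at key
  · simp at key
  · intro i _ hi
    exact if_neg fun h' => hi (Fin.ext (by simp only [Fin.val_zero] at h' ⊢; omega))
  · simp

theorem isPeriodicPt_sigmaAff_iff {p : ℕ} (hp : p.Prime) [CharP F p] {m : ℕ} (hm : m ≠ 0)
    (k : ℕ) (x : Fin m → F) : IsPeriodicPt (sigmaAff F m) k x ↔ p ^ (1 + Nat.log p m) ∣ k := by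
  have hperiod : IsPeriodicPt (sigmaAff F m) (p ^ (1 + Nat.log p m)) x :=
    isPeriodicPt_sigmaAff_char_pow hp (add_comm 1 _ ▸ Nat.lt_pow_succ_log_self hp.one_lt m) x
  refine ⟨fun hx => ?_, hperiod.trans_dvd⟩
  by_contra hdvd
  obtain ⟨e, he, hgcd⟩ := (Nat.dvd_prime_pow hp).1 (Nat.gcd_dvd_right k (p ^ (1 + Nat.log p m)))
  have he_ne : e ≠ 1 + Nat.log p m := by
    rintro rfl
    exact hdvd (hgcd ▸ Nat.gcd_dvd_left _ _)
  have hpow_le : p ^ e ≤ m :=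
    (Nat.pow_le_pow_right hp.pos (by omega)).trans (Nat.pow_log_le_self p hm)
  exact not_isPeriodicPt_sigmaAff_char_pow hp hpow_le x (hgcd ▸ hx.gcd hperiod)

end

/-- `ν(k) ≥ 1 + ⌊log_p m⌋` is encoded as `p^{1+⌊log_p m⌋} ∣ k`, which also covers `k = 0`. -/
theorem stmt_6 {p : ℕ} (hp : p.Prime) {F : Type*} [Field F] [Fintype F] [CharP F p]
    (m : ℕ) (hm : 1 ≤ m) (k : ℕ) :
    Nat.card {x : Fin m → F // (sigmaAff F m)^[k] x = x}
      = if p ^ (1 + Nat.log p m) ∣ k then (Fintype.card F) ^ m else 0 := by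
  have hfix (x : Fin m → F) : (sigmaAff F m)^[k] x = x ↔ p ^ (1 + Nat.log p m) ∣ k :=
    isPeriodicPt_sigmaAff_iff hp (by omega) k x
  split_ifs with hdvd
  · rw [Nat.card_congr (Equiv.subtypeUnivEquiv fun x => (hfix x).2 hdvd), Nat.card_fun,
      Nat.card_eq_fintype_card, Nat.card_fin]
  · exact Nat.card_eq_zero.2 (.inl (isEmpty_subtype _ |>.2 fun x hx => hdvd ((hfix x).1 hx)))
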